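/- Let Λ̄ = 𝔽_p[[T]] and suppose M is a discrete Λ̄-module which is the sum of the images of two homomorphisms φ, φ' from Λ̄^∨ to M. If dim_{𝔽_p} M^Γ = 2 (where M^Γ = M[T]), then M^∨ is a free Λ̄-module of rank 2. -/

import Mathlib

section PontryaginDual

variable (p : ℕ) [Fact p.Prime] (M : Type) [AddCommGroup M] [Module (ZMod p) M]
  [Module (PowerSeries (ZMod p)) M] [SMulCommClass (ZMod p) (PowerSeries (ZMod p)) M]

/-- Multiplication by `a ∈ Λ̄ = 𝔽_p[[T]]` as an `𝔽_p`-linear map on `M`. -/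
noncomputable def smulLM (a : PowerSeries (ZMod p)) : M →ₗ[ZMod p] M where
  toFun m := a • m
  map_add' x y := smul_add a x y
  map_smul' c m := (smul_comm c a m).symm

/-- The Pontryagin dual of a discrete `Λ̄`-module `M` (an `𝔽_p`-vector space), namely its
full `𝔽_p`-linear dual. -/
def PDual : Type := M →ₗ[ZMod p] ZMod p

instance : AddCommGroup (PDual p M) :=
  inferInstanceAs (AddCommGroup (M →ₗ[ZMod p] ZMod p))

/-- A `PDual` element as a bona fide linear map. -/
def PDual.lin (f : PDual p M) : M →ₗ[ZMod p] ZMod p := f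

/-- The `Λ̄`-module structure on the Pontryagin dual: `(a • f) m = f (a • m)`. -/
noncomputable instance : Module (PowerSeries (ZMod p)) (PDual p M) where
  smul a f := LinearMap.comp (PDual.lin p M f) (smulLM p M a)
  one_smul f := LinearMap.ext fun m => by
    show PDual.lin p M f ((1 : PowerSeries (ZMod p)) • m) = PDual.lin p M f m
    rw [one_smul]
  mul_smul a b f := LinearMap.ext fun m => by
    show PDual.lin p M f ((a * b) • m) = PDual.lin p M f (b • a • m)
    rw [mul_comm, mul_smul]
  smul_zero a := LinearMap.ext fun m => rfl
  smul_add a f g := LinearMap.ext fun m => rfl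
  add_smul a b f := LinearMap.ext fun m => by
    show PDual.lin p M f ((a + b) • m) =
      PDual.lin p M f (a • m) + PDual.lin p M f (b • m)
    rw [add_smul, map_add]
  zero_smul f := LinearMap.ext fun m => by
    show PDual.lin p M f ((0 : PowerSeries (ZMod p)) • m) = 0
    rw [zero_smul, map_zero]

/-- The `𝔽_p`-subspace of `M` killed by `a ∈ Λ̄`; for `a = T^{p^n}` these are the
`Γ_n`-invariants `M^{Γ_n}` of the corresponding discrete `Γ`-module (and for `a = T` the
`Γ`-invariants `M^Γ = M[T]`). -/
def invariantsKer (a : PowerSeries (ZMod p)) : Submodule (ZMod p) M where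
  carrier := {m | a • m = 0}
  zero_mem' := smul_zero a
  add_mem' := by
    intro x y hx hy
    show a • (x + y) = 0
    rw [smul_add, hx, hy, add_zero]
  smul_mem' := by
    intro c m hm
    show a • c • m = 0
    rw [← smul_comm c a m, hm, smul_zero]

/-- The Pontryagin dual `Λ̄^∨` of `Λ̄ = 𝔽_p[[T]]` itself, realized as
`𝔽_p((T))/𝔽_p[[T]]`. -/
def PontLambdaDual : Type :=
  LaurentSeries (ZMod p) ⧸
    LinearMap.range (Algebra.linearMap (PowerSeries (ZMod p)) (LaurentSeries (ZMod p)))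

noncomputable instance : AddCommGroup (PontLambdaDual p) :=
  inferInstanceAs (AddCommGroup (LaurentSeries (ZMod p) ⧸
    LinearMap.range (Algebra.linearMap (PowerSeries (ZMod p)) (LaurentSeries (ZMod p)))))

noncomputable instance : Module (PowerSeries (ZMod p)) (PontLambdaDual p) :=
  inferInstanceAs (Module (PowerSeries (ZMod p)) (LaurentSeries (ZMod p) ⧸
    LinearMap.range (Algebra.linearMap (PowerSeries (ZMod p)) (LaurentSeries (ZMod p)))))

end PontryaginDual

/-!
The series `∑ₙ g(T^{-(n+1)}) Tⁿ` identifies the `𝔽_p`-dual of `Λ̄^∨` with `Λ̄`, compatibly with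
the `Λ̄`-actions. Dualizing `φ` and `φ'` therefore gives a `Λ̄`-linear map `M^∨ → Λ̄²`, which is
injective because the images of `φ` and `φ'` span `M`; so `M^∨` is free of some rank `m ≤ 2` over
the PID `Λ̄`. Then `M^∨ / T M^∨ ≅ 𝔽_pᵐ`; on the other hand multiplication by `T` on `M^∨` is the
transpose of multiplication by `T` on `M`, so `M^∨ / T M^∨` is the dual of `M[T] = M^Γ`, of
dimension `2`.
-/

open Module PowerSeries LaurentSeries

theorem LaurentSeries.X_pow_smul_single {K : Type*} [CommRing K] (k : ℕ) (m : ℤ) :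
    (X ^ k : K⟦X⟧) • (HahnSeries.single m 1 : K⸨X⸩) = HahnSeries.single (m + k) 1 := by
  rw [Algebra.smul_def, coe_algebraMap, HahnSeries.ofPowerSeries_X_pow,
    HahnSeries.single_mul_single, one_mul, add_comm]

namespace PontLambdaDual

variable (p : ℕ) [Fact p.Prime]

noncomputable instance : Module (ZMod p) (PontLambdaDual p) :=
  inferInstanceAs (Module (ZMod p) ((ZMod p)⸨X⸩ ⧸
    LinearMap.range (Algebra.linearMap (ZMod p)⟦X⟧ (ZMod p)⸨X⸩)))

noncomputable def mkQ : (ZMod p)⸨X⸩ →ₗ[(ZMod p)⟦X⟧] PontLambdaDual p :=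
  Submodule.mkQ _

theorem mkQ_surjective : Function.Surjective (mkQ p) :=
  Submodule.mkQ_surjective _

theorem mkQ_coe_eq_zero (a : (ZMod p)⟦X⟧) : mkQ p (a : (ZMod p)⸨X⸩) = 0 :=
  (Submodule.Quotient.mk_eq_zero _).mpr (LinearMap.mem_range_self _ a)

noncomputable def negSuccMonomial (n : ℕ) : PontLambdaDual p :=
  mkQ p (HahnSeries.single (-(n + 1) : ℤ) 1)

theorem X_pow_smul_negSuccMonomial_of_le {k n : ℕ} (h : k ≤ n) :
    (X ^ k : (ZMod p)⟦X⟧) • negSuccMonomial p n = negSuccMonomial p (n - k) := by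
  rw [negSuccMonomial, ← map_smul, X_pow_smul_single, negSuccMonomial]
  congr 3
  omega

theorem X_pow_succ_smul_negSuccMonomial (n : ℕ) :
    (X ^ (n + 1) : (ZMod p)⟦X⟧) • negSuccMonomial p n = 0 := by
  rw [negSuccMonomial, ← map_smul, X_pow_smul_single,
    show -(n + 1 : ℤ) + (n + 1 : ℕ) = 0 by omega, HahnSeries.single_zero_one,
    ← map_one (HahnSeries.ofPowerSeries ℤ (ZMod p)), mkQ_coe_eq_zero]

theorem smul_negSuccMonomial (a : (ZMod p)⟦X⟧) (n : ℕ) :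
    a • negSuccMonomial p n =
      ∑ k ∈ Finset.range (n + 1), coeff k a • negSuccMonomial p (n - k) := by
  conv_lhs => rw [eq_X_pow_mul_shift_add_trunc (n + 1) a]
  rw [add_smul, mul_comm, mul_smul, X_pow_succ_smul_negSuccMonomial, smul_zero, zero_add,
    trunc_apply, Nat.Ico_zero_eq_range, ← Polynomial.coeToPowerSeries.ringHom_apply, map_sum,
    Finset.sum_smul]
  refine Finset.sum_congr rfl fun k hk => ?_
  rw [Polynomial.coeToPowerSeries.ringHom_apply, Polynomial.coe_monomial, monomial_eq_C_mul_X_pow,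
    ← smul_eq_C_mul, smul_assoc,
    X_pow_smul_negSuccMonomial_of_le p (Finset.mem_range_succ_iff.mp hk)]

theorem span_range_negSuccMonomial :
    Submodule.span (ZMod p) (Set.range (negSuccMonomial p)) = ⊤ := by
  refine eq_top_iff.mpr fun q _ => ?_
  obtain ⟨x, rfl⟩ := mkQ_surjective p q
  have hx : x = x.powerSeriesPart • HahnSeries.single x.order 1 := by
    rw [Algebra.smul_def, coe_algebraMap, mul_comm, single_order_mul_powerSeriesPart]
  rw [hx, map_smul]
  rcases le_or_gt 0 x.order with hord | hord
  · have hcoe : (HahnSeries.single x.order 1 : (ZMod p)⸨X⸩) =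
        (X ^ x.order.toNat : (ZMod p)⟦X⟧) := by
      rw [HahnSeries.ofPowerSeries_X_pow, Int.toNat_of_nonneg hord]
    rw [hcoe, mkQ_coe_eq_zero, smul_zero]
    exact zero_mem _
  · obtain ⟨n, hn⟩ : ∃ n : ℕ, x.order = -(n + 1 : ℤ) := ⟨(-x.order - 1).toNat, by omega⟩
    rw [hn, ← negSuccMonomial, smul_negSuccMonomial]
    exact Submodule.sum_mem _ fun k _ =>
      Submodule.smul_mem _ _ (Submodule.subset_span ⟨n - k, rfl⟩)

noncomputable def functionalSeries : Dual (ZMod p) (PontLambdaDual p) →ₗ[ZMod p] (ZMod p)⟦X⟧ where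
  toFun g := mk fun n => g (negSuccMonomial p n)
  map_add' g h := by ext; simp
  map_smul' c g := by ext; simp

@[simp]
theorem coeff_functionalSeries (g : Dual (ZMod p) (PontLambdaDual p)) (n : ℕ) :
    coeff n (functionalSeries p g) = g (negSuccMonomial p n) :=
  coeff_mk n fun n => g (negSuccMonomial p n)

theorem functionalSeries_injective : Function.Injective (functionalSeries p) :=
  fun g h hgh => LinearMap.ext_on_range (span_range_negSuccMonomial p) fun n => by
    simpa using congr(coeff n $hgh)

theorem functionalSeries_comp_smul (g : Dual (ZMod p) (PontLambdaDual p)) (a : (ZMod p)⟦X⟧) :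
    functionalSeries p (g ∘ₗ DistribSMul.toLinearMap (ZMod p) (PontLambdaDual p) a) =
      a * functionalSeries p g := by
  ext n
  rw [coeff_functionalSeries, LinearMap.comp_apply, DistribSMul.toLinearMap_apply,
    smul_negSuccMonomial, map_sum, coeff_mul, Finset.Nat.sum_antidiagonal_eq_sum_range_succ_mk]
  simp only [map_smul, smul_eq_mul, coeff_functionalSeries]

end PontLambdaDual

theorem LinearMap.finrank_quotient_range_dualMap {K V W : Type*} [Field K] [AddCommGroup V]
    [Module K V] [AddCommGroup W] [Module K W] (t : V →ₗ[K] W) :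
    finrank K (Dual K V ⧸ LinearMap.range t.dualMap) = finrank K (LinearMap.ker t) := by
  rw [t.range_dualMap_eq_dualAnnihilator_ker, (Subspace.quotAnnihilatorEquiv _).finrank_eq,
    Subspace.dual_finrank_eq]

theorem Module.Basis.finrank_quotient_range_smul {K R N ι : Type*} [CommRing K]
    [StrongRankCondition K] [CommRing R] [Algebra K R] [AddCommGroup N] [Module R N]
    [Module K N] [IsScalarTower K R N] [Fintype ι]
    (b : Basis ι R N) (ε : R →ₗ[K] K) (hε : Function.Surjective ε) (x : R)
    (hx : ∀ a, ε a = 0 ↔ x ∣ a) :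
    finrank K (N ⧸ LinearMap.range (DistribSMul.toLinearMap K N x)) = Fintype.card ι := by
  let θ : N →ₗ[K] ι → K := ε.compLeft ι ∘ₗ b.equivFun.toLinearMap.restrictScalars K
  have hθ : Function.Surjective θ := hε.comp_left.comp b.equivFun.surjective
  have hker : LinearMap.ker θ = LinearMap.range (DistribSMul.toLinearMap K N x) := by
    ext f
    simp only [LinearMap.mem_ker, LinearMap.mem_range, DistribSMul.toLinearMap_apply]
    constructor
    · intro hf
      choose d hd using fun i => (hx _).mp (congrFun hf i)
      refine ⟨b.equivFun.symm d, b.equivFun.injective ?_⟩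
      ext i
      rw [map_smul, LinearEquiv.apply_symm_apply, Pi.smul_apply, smul_eq_mul]
      exact (hd i).symm
    · rintro ⟨y, rfl⟩
      ext i
      exact (hx _).mpr ⟨b.equivFun y i, by simp⟩
  rw [← hker, (θ.quotKerEquivOfSurjective hθ).finrank_eq, Module.finrank_fintype_fun_eq_card]

section PDual

variable (p : ℕ) [Fact p.Prime] (M : Type) [AddCommGroup M] [Module (ZMod p) M]

noncomputable instance : Module (ZMod p) (PDual p M) :=
  inferInstanceAs (Module (ZMod p) (Dual (ZMod p) M))

variable [Module (ZMod p)⟦X⟧ M] [SMulCommClass (ZMod p) (ZMod p)⟦X⟧ M]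

-- Multiplication by `a` on `M^∨` is, by definition, the transpose `(smulLM p M a).dualMap`.
theorem finrank_quotient_range_smul_eq_finrank_invariantsKer (a : (ZMod p)⟦X⟧) :
    finrank (ZMod p) (PDual p M ⧸ LinearMap.range (DistribSMul.toLinearMap (ZMod p) (PDual p M) a))
      = finrank (ZMod p) (invariantsKer p M a) :=
  (smulLM p M a).finrank_quotient_range_dualMap

noncomputable def dualSeries (φ : PontLambdaDual p →ₗ[(ZMod p)⟦X⟧] M) :
    PDual p M →ₗ[(ZMod p)⟦X⟧] (ZMod p)⟦X⟧ where
  toFun f := PontLambdaDual.functionalSeries p ((φ.restrictScalars (ZMod p)).dualMap f)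
  map_add' f g := by rw [← map_add]; rfl
  map_smul' a f := by
    rw [RingHom.id_apply, smul_eq_mul, ← PontLambdaDual.functionalSeries_comp_smul]
    congr 1
    ext q
    exact congrArg (PDual.lin p M f) (map_smul φ a q).symm

theorem injective_pi_dualSeries {ι : Type*} (φ : ι → PontLambdaDual p →ₗ[(ZMod p)⟦X⟧] M)
    (hφ : ⨆ i, LinearMap.range (φ i) = ⊤) :
    Function.Injective (LinearMap.pi fun i => dualSeries p M (φ i)) := by
  refine (injective_iff_map_eq_zero _).mpr fun f hf => ?_
  have hcomp (i : ι) : ((φ i).restrictScalars (ZMod p)).dualMap f = 0 :=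
    PontLambdaDual.functionalSeries_injective p (by rw [map_zero]; exact congrFun hf i)
  refine LinearMap.ext fun m => Submodule.iSup_induction _
    (motive := fun m => PDual.lin p M f m = 0)
    (hφ ▸ Submodule.mem_top : m ∈ ⨆ i, LinearMap.range (φ i)) ?_ (map_zero _) ?_
  · rintro i _ ⟨q, rfl⟩
    exact LinearMap.congr_fun (hcomp i) q
  · intro m₁ m₂ h₁ h₂
    rw [map_add, h₁, h₂, add_zero]

end PDual

/-- Let `Λ̄ = 𝔽_p[[T]]` and suppose the discrete `Λ̄`-module `M` is the sum of the images of
two homomorphisms `φ, φ' : Λ̄^∨ → M`.  If `dim_{𝔽_p} M^Γ = 2` (where `M^Γ = M[T]`), then the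
Pontryagin dual `M^∨` is a free `Λ̄`-module of rank `2`. -/
theorem dual_free_rank_two_of_two_generators (p : ℕ) [Fact p.Prime]
    (M : Type) [AddCommGroup M] [Module (ZMod p) M] [Module (PowerSeries (ZMod p)) M]
    [SMulCommClass (ZMod p) (PowerSeries (ZMod p)) M]
    (φ φ' : PontLambdaDual p →ₗ[PowerSeries (ZMod p)] M)
    (hsum : LinearMap.range φ ⊔ LinearMap.range φ' = ⊤)
    (hinv : Module.finrank (ZMod p)
      (invariantsKer p M (PowerSeries.X : PowerSeries (ZMod p))) = 2) :
    Module.Free (PowerSeries (ZMod p)) (PDual p M) ∧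
      Module.rank (PowerSeries (ZMod p)) (PDual p M) = 2 := by
  have hgen : ⨆ i, LinearMap.range (![φ, φ'] i) = ⊤ := by
    rw [← hsum, ← Finset.sup_univ_eq_iSup]
    simp [Fin.univ_succ]
  let D := LinearMap.pi fun i => dualSeries p M (![φ, φ'] i)
  obtain ⟨m, bD⟩ := Submodule.basisOfPid (Pi.basisFun (ZMod p)⟦X⟧ (Fin 2)) (LinearMap.range D)
  let b := bD.map (LinearEquiv.ofInjective D (injective_pi_dualSeries p M ![φ, φ'] hgen)).symm
  have hm : m = 2 := by
    rw [← hinv, ← finrank_quotient_range_smul_eq_finrank_invariantsKer,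
      b.finrank_quotient_range_smul (coeff 0) (fun c => ⟨C c, coeff_zero_C c⟩) X
        fun a => by rw [X_dvd_iff, coeff_zero_eq_constantCoeff_apply], Fintype.card_fin]
  exact ⟨.of_basis b, by rw [rank_eq_card_basis b, Fintype.card_fin, hm, Nat.cast_ofNat]⟩
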